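/- Let M be a real m×n matrix with singular value decomposition M = [U_1 U_2]·diag(Σ_1, Σ_2)·[V_1 V_2]^*, where Σ_1 is the r×r diagonal matrix of the r largest singular values of M and the columns of V_1 are the corresponding r top right singular vectors. Let H be an n×l matrix with ||H||_2 ≤ 1, write C_1 = V_1^*H, and assume rank(C_1) = r. Let XY = MH(MH)^+M. Then ||M − XY|| / σ̃_{r+1}(M) ≤ (1 + ||C_1^+||²)^{1/2}, where ||·|| denotes either the spectral norm or the Frobenius norm, and σ̃_{r+1}(M) denotes the corresponding optimal rank-r approximation error. -/

import Mathlib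

open Matrix MeasureTheory ProbabilityTheory Real
open scoped BigOperators ENNReal

noncomputable section

namespace LRA

/-- The `j`-th largest singular value (1-indexed) of a real `m × n` matrix;
by convention it is `0` for `j = 0` or `j > n`. -/
noncomputable def sval {m n : ℕ} (A : Matrix (Fin m) (Fin n) ℝ) (j : ℕ) : ℝ :=
  if hj : 1 ≤ j ∧ j ≤ n then
    Real.sqrt ((show (Aᵀ * A).IsHermitian from Matrix.isHermitian_conjTranspose_mul_self A).eigenvalues
      (Tuple.sort (show (Aᵀ * A).IsHermitian from Matrix.isHermitian_conjTranspose_mul_self A).eigenvalues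
        (Fin.rev ⟨j - 1, by omega⟩)))
  else 0

/-- Spectral norm: the largest singular value. -/
noncomputable def specNorm {m n : ℕ} (A : Matrix (Fin m) (Fin n) ℝ) : ℝ := sval A 1

/-- Frobenius norm. -/
noncomputable def frobNorm {m n : ℕ} (A : Matrix (Fin m) (Fin n) ℝ) : ℝ :=
  Real.sqrt (∑ i, ∑ j, (A i j) ^ 2)

/-- The optimal Frobenius rank-`r` approximation error `(∑_{j>r} σ_j(A)²)^{1/2}`. -/
noncomputable def frobTail {m n : ℕ} (A : Matrix (Fin m) (Fin n) ℝ) (r : ℕ) : ℝ :=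
  Real.sqrt (∑ j ∈ Finset.Ioc r n, sval A j ^ 2)

/-- The four Penrose conditions. -/
def IsMoorePenrose {m n : ℕ} (A : Matrix (Fin m) (Fin n) ℝ)
    (B : Matrix (Fin n) (Fin m) ℝ) : Prop :=
  A * B * A = A ∧ B * A * B = B ∧ (A * B)ᵀ = A * B ∧ (B * A)ᵀ = B * A

open scoped Classical in
/-- The Moore–Penrose pseudoinverse. -/
noncomputable def pinv {m n : ℕ} (A : Matrix (Fin m) (Fin n) ℝ) :
    Matrix (Fin n) (Fin m) ℝ :=
  if h : ∃ B, IsMoorePenrose A B then h.choose else 0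

/-- The `r`-projective volume `∏_{j=1}^r σ_j(A)`. -/
noncomputable def pvol {m n : ℕ} (r : ℕ) (A : Matrix (Fin m) (Fin n) ℝ) : ℝ :=
  ∏ j ∈ Finset.Icc 1 r, sval A j

instance matrixMeasurableSpace {p q : ℕ} : MeasurableSpace (Matrix (Fin p) (Fin q) ℝ) :=
  MeasurableSpace.pi

/-- A random matrix all of whose entries are i.i.d. standard normal random variables. -/
def IsGaussianMatrix {Ω : Type*} [MeasurableSpace Ω] (μ : Measure Ω) {p q : ℕ}
    (G : Ω → Matrix (Fin p) (Fin q) ℝ) : Prop :=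
  Measurable G ∧
  iIndepFun (β := fun _ : Fin p × Fin q => ℝ)
    (fun ij ω => G ω ij.1 ij.2) μ ∧
  ∀ i j, Measure.map (fun ω => G ω i j) μ = gaussianReal 0 1

/-- The `k × l` submatrix of `W` with rows indexed by `I` and columns by `J`. -/
noncomputable def subm {m n k l : ℕ} (W : Matrix (Fin m) (Fin n) ℝ)
    {I : Finset (Fin m)} {J : Finset (Fin n)} (hI : I.card = k) (hJ : J.card = l) :
    Matrix (Fin k) (Fin l) ℝ :=
  W.submatrix (fun i => ((I.orderIsoOfFin hI i : I) : Fin m))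
    (fun j => ((J.orderIsoOfFin hJ j : J) : Fin n))

/-! Let `P = MH(MH)⁺` be the orthogonal projector onto the range of `MH`. Since `1 - P` annihilates
`MH`, the residual `(1 - P)M` equals `(1 - P)(M - MH C₁⁺V₁ᵀ)`, and `C₁C₁⁺ = 1` turns
`M - MH C₁⁺V₁ᵀ` into `U₂Σ₂W` with `W = V₂ᵀ - C₂C₁⁺V₁ᵀ`. Orthonormality of `[V₁ V₂]` gives
`WWᵀ = 1 + (C₂C₁⁺)(C₂C₁⁺)ᵀ`, so by the C*-identity `‖W‖² ≤ 1 + ‖C₁⁺‖²`, as `‖C₂‖ ≤ ‖H‖ ≤ 1`.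
Since `1 - P` and `U₂` are contractions, the residual is at most `‖Σ₂‖‖W‖` in the spectral norm and
`‖Σ₂‖_F‖W‖` in the Frobenius norm, where `‖Σ₂‖ ≤ σ_{r+1}`, `‖Σ₂‖_F ≤ σ̃_{r+1}` and
`‖C₁⁺‖ ≤ ‖C₁⁺‖_F`.

The singular-value definition of `specNorm` agrees with the `L²` operator norm because
`‖A‖² = ‖AᵀA‖ = λ_max(AᵀA)`. -/

open scoped Matrix.Norms.L2Operator

section SingularValues

variable {m n : ℕ}

lemma sval_nonneg (A : Matrix (Fin m) (Fin n) ℝ) (j : ℕ) : 0 ≤ sval A j := by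
  unfold sval
  split_ifs
  exacts [Real.sqrt_nonneg _, le_rfl]

lemma sval_le_sval_of_le (A : Matrix (Fin m) (Fin n) ℝ) {j k : ℕ} (hj : 1 ≤ j) (hjk : j ≤ k) :
    sval A k ≤ sval A j := by
  by_cases hk : k ≤ n
  · rw [sval, sval, dif_pos ⟨hj.trans hjk, hk⟩, dif_pos ⟨hj, hjk.trans hk⟩]
    apply Real.sqrt_le_sqrt
    have hle : (Fin.rev ⟨k - 1, by omega⟩ : Fin n) ≤ Fin.rev ⟨j - 1, by omega⟩ := by
      simp only [Fin.le_def, Fin.val_rev]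
      omega
    exact Tuple.monotone_sort (Matrix.isHermitian_conjTranspose_mul_self A).eigenvalues hle
  · rw [sval, dif_neg (by omega)]
    exact sval_nonneg A j

theorem specNorm_eq_norm (A : Matrix (Fin m) (Fin n) ℝ) : specNorm A = ‖A‖ := by
  rcases Nat.eq_zero_or_pos n with rfl | hn
  · rw [specNorm, sval, dif_neg (by omega), Subsingleton.elim A 0, norm_zero]
  set hA : (Aᵀ * A).IsHermitian := Matrix.isHermitian_conjTranspose_mul_self A
  set d := hA.eigenvalues
  set top := Tuple.sort d (Fin.rev ⟨0, hn⟩)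
  have hd_nonneg : ∀ i, 0 ≤ d i := (Matrix.posSemidef_conjTranspose_mul_self A).eigenvalues_nonneg
  have hd_le : ∀ i, d i ≤ d top := fun i => by
    have hi : (Tuple.sort d).symm i ≤ Fin.rev ⟨0, hn⟩ := by
      have := ((Tuple.sort d).symm i).isLt
      simp only [Fin.le_def, Fin.val_rev]
      omega
    simpa using Tuple.monotone_sort d hi
  have hnorm_d : ‖d‖ = d top :=
    le_antisymm ((pi_norm_le_iff_of_nonneg (hd_nonneg top)).2 fun i => by
        rw [Real.norm_of_nonneg (hd_nonneg i)]; exact hd_le i)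
      ((Real.norm_of_nonneg (hd_nonneg top)).symm.le.trans (norm_le_pi_norm d top))
  have hspec := hA.spectral_theorem
  rw [Unitary.conjStarAlgAut_apply, RCLike.ofReal_real_eq_id, Function.id_comp] at hspec
  have hU := hA.eigenvectorUnitary.2
  have hgram : ‖A‖ * ‖A‖ = d top := by
    rw [← Matrix.l2_opNorm_conjTranspose_mul_self, ← hnorm_d, ← Matrix.l2_opNorm_diagonal,
      show Aᴴ * A = Aᵀ * A from rfl, hspec,
      CStarRing.norm_mul_mem_unitary _ (Unitary.star_mem hU), CStarRing.norm_mem_unitary_mul _ hU]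
  rw [specNorm, sval, dif_pos ⟨le_rfl, hn⟩, ← Real.sqrt_mul_self (norm_nonneg A), hgram]

lemma frobTail_sq (A : Matrix (Fin m) (Fin n) ℝ) (r : ℕ) :
    frobTail A r ^ 2 = ∑ k ∈ Finset.range (n - r), sval A (r + k + 1) ^ 2 := by
  rw [frobTail, Real.sq_sqrt (by positivity), ← Finset.Ico_add_one_add_one_eq_Ioc,
    Finset.sum_Ico_eq_sum_range, Nat.add_sub_add_right]
  simp only [add_right_comm r 1]

end SingularValues

section OperatorNorm

variable {ι κ ν : Type*} [Fintype ι] [Fintype κ] [Fintype ν]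

lemma norm_transpose [DecidableEq ι] [DecidableEq κ] (A : Matrix ι κ ℝ) : ‖Aᵀ‖ = ‖A‖ :=
  Matrix.l2_opNorm_conjTranspose A

lemma norm_transpose_mul_self [DecidableEq κ] (A : Matrix ι κ ℝ) : ‖Aᵀ * A‖ = ‖A‖ ^ 2 := by
  rw [sq]
  exact Matrix.l2_opNorm_conjTranspose_mul_self A

lemma norm_mul_transpose_self [DecidableEq ι] [DecidableEq κ] (A : Matrix ι κ ℝ) :
    ‖A * Aᵀ‖ = ‖A‖ ^ 2 := by
  simpa only [transpose_transpose, norm_transpose] using norm_transpose_mul_self Aᵀ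

lemma norm_le_one_of_transpose_mul_self_eq_one [DecidableEq κ] {A : Matrix ι κ ℝ}
    (h : Aᵀ * A = 1) : ‖A‖ ≤ 1 := by
  have h1 : ‖A‖ ^ 2 ≤ 1 := by
    rw [← norm_transpose_mul_self, h]
    exact (IsStarProjection.one _).norm_le
  nlinarith [norm_nonneg A]

lemma norm_mul_le_one [DecidableEq κ] [DecidableEq ν] {A : Matrix ι κ ℝ} {B : Matrix κ ν ℝ}
    (hA : ‖A‖ ≤ 1) (hB : ‖B‖ ≤ 1) : ‖A * B‖ ≤ 1 :=
  (Matrix.l2_opNorm_mul A B).trans (mul_le_one₀ hA (norm_nonneg B) hB)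

lemma norm_le_sqrt_one_add_sq_of_mul_transpose_self [DecidableEq ι] [DecidableEq κ]
    [DecidableEq ν] {W : Matrix ι κ ℝ} {X : Matrix ι ν ℝ} (h : W * Wᵀ = 1 + X * Xᵀ) :
    ‖W‖ ≤ √(1 + ‖X‖ ^ 2) := by
  refine Real.le_sqrt_of_sq_le ?_
  rw [← norm_mul_transpose_self, h, ← norm_mul_transpose_self]
  exact (norm_add_le _ _).trans (add_le_add_left (IsStarProjection.one _).norm_le _)

end OperatorNorm

section Frobenius

variable {p q s : ℕ}

lemma frobNorm_nonneg (A : Matrix (Fin p) (Fin q) ℝ) : 0 ≤ frobNorm A :=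
  Real.sqrt_nonneg _

lemma frobNorm_sq (A : Matrix (Fin p) (Fin q) ℝ) : frobNorm A ^ 2 = ∑ i, ∑ j, A i j ^ 2 :=
  Real.sq_sqrt (by positivity)

lemma frobNorm_sq_eq_trace (A : Matrix (Fin p) (Fin q) ℝ) : frobNorm A ^ 2 = (Aᵀ * A).trace := by
  rw [frobNorm_sq, Finset.sum_comm]
  simp [trace, mul_apply, sq]

lemma frobNorm_sq_eq_sum_norm_sq_col (A : Matrix (Fin p) (Fin q) ℝ) :
    frobNorm A ^ 2 = ∑ j, ‖(EuclideanSpace.equiv (Fin p) ℝ).symm (fun i => A i j)‖ ^ 2 := by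
  simp only [frobNorm_sq, EuclideanSpace.real_norm_sq_eq]
  exact Finset.sum_comm

lemma frobNorm_transpose (A : Matrix (Fin p) (Fin q) ℝ) : frobNorm Aᵀ = frobNorm A := by
  rw [frobNorm, frobNorm, Finset.sum_comm]
  rfl

lemma norm_le_frobNorm (A : Matrix (Fin p) (Fin q) ℝ) : ‖A‖ ≤ frobNorm A := by
  rw [Matrix.l2_opNorm_def]
  refine ContinuousLinearMap.opNorm_le_bound _ (frobNorm_nonneg A) fun x => ?_
  refine le_of_sq_le_sq ?_ (mul_nonneg (frobNorm_nonneg A) (norm_nonneg x))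
  simp only [LinearEquiv.trans_apply, LinearMap.coe_toContinuousLinearMap', Matrix.toLpLin_apply]
  rw [mul_pow, EuclideanSpace.real_norm_sq_eq, EuclideanSpace.real_norm_sq_eq, frobNorm_sq,
    Finset.sum_mul]
  exact Finset.sum_le_sum fun i _ => Finset.sum_mul_sq_le_sq_mul_sq Finset.univ (A i) x.ofLp

lemma frobNorm_mul_le_norm_mul_frobNorm (A : Matrix (Fin p) (Fin q) ℝ)
    (B : Matrix (Fin q) (Fin s) ℝ) : frobNorm (A * B) ≤ ‖A‖ * frobNorm B := by
  refine le_of_sq_le_sq ?_ (by positivity [frobNorm_nonneg B])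
  rw [mul_pow, frobNorm_sq_eq_sum_norm_sq_col, frobNorm_sq_eq_sum_norm_sq_col, Finset.mul_sum]
  refine Finset.sum_le_sum fun j _ => ?_
  have hcol : (fun i => (A * B) i j) = A *ᵥ fun k => B k j := by
    ext i
    simp [mul_apply, mulVec, dotProduct]
  rw [← mul_pow, hcol]
  exact pow_le_pow_left₀ (norm_nonneg _)
    (Matrix.l2_opNorm_mulVec A ((EuclideanSpace.equiv (Fin q) ℝ).symm fun k => B k j)) 2

lemma frobNorm_mul_le_frobNorm_mul_norm (A : Matrix (Fin p) (Fin q) ℝ)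
    (B : Matrix (Fin q) (Fin s) ℝ) : frobNorm (A * B) ≤ frobNorm A * ‖B‖ := by
  rw [← frobNorm_transpose, transpose_mul, mul_comm, ← frobNorm_transpose A, ← norm_transpose B]
  exact frobNorm_mul_le_norm_mul_frobNorm Bᵀ Aᵀ

end Frobenius

section RectDiagonal

variable {p q : ℕ}

def rectDiagonal (f : ℕ → ℝ) : Matrix (Fin p) (Fin q) ℝ :=
  Matrix.of fun i j => if (i : ℕ) = j then f j else 0

lemma transpose_mul_rectDiagonal (f : ℕ → ℝ) :
    (rectDiagonal f : Matrix (Fin p) (Fin q) ℝ)ᵀ * (rectDiagonal f : Matrix (Fin p) (Fin q) ℝ) =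
      diagonal fun j : Fin q => if (j : ℕ) < p then f j ^ 2 else 0 := by
  ext j k
  simp only [mul_apply, transpose_apply, rectDiagonal, of_apply]
  rw [Fin.sum_univ_eq_sum_range
    (fun i => (if i = (j : ℕ) then f j else 0) * (if i = (k : ℕ) then f k else 0))]
  simp only [ite_mul, zero_mul, Finset.sum_ite_eq', Finset.mem_range, diagonal_apply, Fin.ext_iff]
  split_ifs <;> simp_all [sq]

lemma norm_rectDiagonal_le {f : ℕ → ℝ} {c : ℝ} (hc : 0 ≤ c) (hf : ∀ k, |f k| ≤ c) :
    ‖(rectDiagonal f : Matrix (Fin p) (Fin q) ℝ)‖ ≤ c := by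
  refine le_of_sq_le_sq ?_ hc
  rw [← norm_transpose_mul_self, transpose_mul_rectDiagonal, Matrix.l2_opNorm_diagonal]
  refine (pi_norm_le_iff_of_nonneg (sq_nonneg c)).2 fun j => ?_
  split_ifs
  · rw [Real.norm_of_nonneg (sq_nonneg _), ← sq_abs]
    exact pow_le_pow_left₀ (abs_nonneg _) (hf j) 2
  · simpa using sq_nonneg c

lemma frobNorm_rectDiagonal_sq_le (f : ℕ → ℝ) :
    frobNorm (rectDiagonal f : Matrix (Fin p) (Fin q) ℝ) ^ 2 ≤ ∑ k ∈ Finset.range q, f k ^ 2 := by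
  rw [frobNorm_sq_eq_trace, transpose_mul_rectDiagonal, trace_diagonal,
    ← Fin.sum_univ_eq_sum_range (fun k => f k ^ 2)]
  refine Finset.sum_le_sum fun j _ => ?_
  split_ifs
  exacts [le_rfl, sq_nonneg _]

lemma norm_rectDiagonal_sval_le {m n : ℕ} (M : Matrix (Fin m) (Fin n) ℝ) (r : ℕ) :
    ‖(rectDiagonal fun k => sval M (r + k + 1) : Matrix (Fin p) (Fin q) ℝ)‖ ≤ sval M (r + 1) := by
  refine norm_rectDiagonal_le (sval_nonneg M _) fun k => ?_
  rw [abs_of_nonneg (sval_nonneg M _)]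
  exact sval_le_sval_of_le M (by omega) (by omega)

lemma frobNorm_rectDiagonal_sval_le {m n : ℕ} (M : Matrix (Fin m) (Fin n) ℝ) (r : ℕ) :
    frobNorm (rectDiagonal fun k => sval M (r + k + 1) : Matrix (Fin p) (Fin (n - r)) ℝ) ≤
      frobTail M r := by
  refine le_of_sq_le_sq ?_ (Real.sqrt_nonneg _)
  rw [frobTail_sq]
  exact frobNorm_rectDiagonal_sq_le _

end RectDiagonal

section PseudoInverse

lemma conj_diagonal_mul_conj_diagonal {ι R : Type*} [Fintype ι] [DecidableEq ι] [CommSemiring R]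
    {U : Matrix ι ι R} (hU : Uᵀ * U = 1) (a b : ι → R) :
    U * diagonal a * Uᵀ * (U * diagonal b * Uᵀ) = U * diagonal (a * b) * Uᵀ := by
  calc U * diagonal a * Uᵀ * (U * diagonal b * Uᵀ)
      = U * diagonal a * (Uᵀ * U) * diagonal b * Uᵀ := by simp only [Matrix.mul_assoc]
    _ = U * diagonal (a * b) * Uᵀ := by
      rw [hU, Matrix.mul_one, Matrix.mul_assoc U, diagonal_mul_diagonal']
      rfl

lemma transpose_conj_diagonal {ι R : Type*} [Fintype ι] [DecidableEq ι] [CommSemiring R]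
    (U : Matrix ι ι R) (a : ι → R) : (U * diagonal a * Uᵀ)ᵀ = U * diagonal a * Uᵀ := by
  rw [transpose_mul, transpose_mul, transpose_transpose, diagonal_transpose, Matrix.mul_assoc]

variable {p q s : ℕ}

lemma exists_symmetric_isMoorePenrose_of_isHermitian {G : Matrix (Fin q) (Fin q) ℝ}
    (hG : G.IsHermitian) : ∃ X, IsMoorePenrose G X ∧ Xᵀ = X := by
  set U : Matrix (Fin q) (Fin q) ℝ := ↑hG.eigenvectorUnitary
  have hU : Uᵀ * U = 1 := Unitary.coe_star_mul_self hG.eigenvectorUnitary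
  set d := hG.eigenvalues
  have hspec : G = U * diagonal d * Uᵀ := by
    have h := hG.spectral_theorem
    rwa [Unitary.conjStarAlgAut_apply, RCLike.ofReal_real_eq_id, Function.id_comp] at h
  have hmul := conj_diagonal_mul_conj_diagonal hU
  -- `d⁻¹` is the pointwise inverse, with `0⁻¹ = 0` on the kernel.
  refine ⟨U * diagonal d⁻¹ * Uᵀ, ⟨?_, ?_, ?_, ?_⟩, transpose_conj_diagonal U _⟩
  · rw [hspec, hmul, hmul]
    congr 3
    ext i
    exact mul_inv_mul_cancel (d i)
  · rw [hspec, hmul, hmul]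
    congr 3
    ext i
    simpa using mul_inv_mul_cancel (d i)⁻¹
  · rw [hspec, hmul, transpose_conj_diagonal]
  · rw [hspec, hmul, transpose_conj_diagonal]

lemma exists_isMoorePenrose (A : Matrix (Fin p) (Fin q) ℝ) : ∃ B, IsMoorePenrose A B := by
  obtain ⟨X, ⟨hGXG, hXGX, hGX, -⟩, hX⟩ := exists_symmetric_isMoorePenrose_of_isHermitian
    (G := Aᵀ * A) (isHermitian_conjTranspose_mul_self A)
  have hGt : (Aᵀ * A)ᵀ = Aᵀ * A := by rw [transpose_mul, transpose_transpose]
  have hXG : X * (Aᵀ * A) = Aᵀ * A * X := by rw [← hGX, transpose_mul, hX, hGt]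
  -- The Gram matrix of `A (1 - X Aᵀ A)` is `(1 - X Aᵀ A)ᵀ (Aᵀ A - Aᵀ A X Aᵀ A) = 0`.
  have hAXG : A * (X * (Aᵀ * A)) = A := by
    have hG0 : Aᵀ * A * (1 - X * (Aᵀ * A)) = 0 := by
      rw [Matrix.mul_sub, Matrix.mul_one, ← Matrix.mul_assoc, hGXG, sub_self]
    have h0 : (A * (1 - X * (Aᵀ * A)))ᴴ * (A * (1 - X * (Aᵀ * A))) = 0 := by
      rw [conjTranspose_eq_transpose_of_trivial, transpose_mul, Matrix.mul_assoc,
        ← Matrix.mul_assoc Aᵀ, hG0, Matrix.mul_zero]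
    have h1 := conjTranspose_mul_self_eq_zero.1 h0
    rwa [Matrix.mul_sub, Matrix.mul_one, sub_eq_zero, eq_comm] at h1
  refine ⟨X * Aᵀ, ?_, ?_, ?_, ?_⟩
  · calc A * (X * Aᵀ) * A = A * (X * (Aᵀ * A)) := by simp only [Matrix.mul_assoc]
      _ = A := hAXG
  · calc X * Aᵀ * A * (X * Aᵀ) = X * (Aᵀ * A) * X * Aᵀ := by simp only [Matrix.mul_assoc]
      _ = X * Aᵀ := by rw [hXGX]
  · rw [← Matrix.mul_assoc, transpose_mul, transpose_mul, transpose_transpose, hX,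
      Matrix.mul_assoc]
  · rw [Matrix.mul_assoc, transpose_mul, hX, hGt, ← hXG]

lemma pinv_isMoorePenrose (A : Matrix (Fin p) (Fin q) ℝ) : IsMoorePenrose A (pinv A) := by
  rw [pinv, dif_pos (exists_isMoorePenrose A)]
  exact (exists_isMoorePenrose A).choose_spec

lemma mul_pinv_eq_one_of_rank_eq {C : Matrix (Fin p) (Fin q) ℝ} (h : C.rank = p) :
    C * pinv C = 1 := by
  have hrange : LinearMap.range C.mulVecLin = ⊤ :=
    Submodule.eq_top_of_finrank_eq (by rw [Module.finrank_fin_fun]; exact h)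
  obtain ⟨g, hg⟩ := LinearMap.exists_rightInverse_of_surjective C.mulVecLin hrange
  have hR : C * LinearMap.toMatrix' g = 1 := by
    rw [← LinearMap.toMatrix'_toLin' C, ← LinearMap.toMatrix'_comp, Matrix.toLin'_apply', hg,
      LinearMap.toMatrix'_id]
  calc C * pinv C = C * pinv C * (C * LinearMap.toMatrix' g) := by rw [hR, Matrix.mul_one]
    _ = 1 := by rw [← Matrix.mul_assoc, (pinv_isMoorePenrose C).1, hR]

lemma norm_one_sub_mul_pinv_le_one (A : Matrix (Fin p) (Fin q) ℝ) : ‖1 - A * pinv A‖ ≤ 1 :=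
  IsStarProjection.norm_le _ <| IsStarProjection.one_sub
    ⟨by rw [IsIdempotentElem, ← Matrix.mul_assoc, (pinv_isMoorePenrose A).1],
      (pinv_isMoorePenrose A).2.2.1⟩

lemma sub_mul_pinv_mul_eq (A : Matrix (Fin p) (Fin q) ℝ) (B : Matrix (Fin p) (Fin s) ℝ)
    (Y : Matrix (Fin s) (Fin q) ℝ) : A - B * pinv B * A = (1 - B * pinv B) * (A - B * Y) := by
  rw [Matrix.mul_sub, ← Matrix.mul_assoc, Matrix.sub_mul _ _ B, Matrix.one_mul,
    (pinv_isMoorePenrose B).1, sub_self, Matrix.zero_mul, sub_zero, Matrix.sub_mul, Matrix.one_mul]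

end PseudoInverse

section SVD

variable {m n l a r k k' : ℕ}

lemma sub_mul_pinv_mul_eq_of_svd {M : Matrix (Fin m) (Fin n) ℝ} {U1 : Matrix (Fin m) (Fin a) ℝ}
    {S1 : Matrix (Fin a) (Fin r) ℝ} {V1 : Matrix (Fin n) (Fin r) ℝ} {U2 : Matrix (Fin m) (Fin k) ℝ}
    {S2 : Matrix (Fin k) (Fin k') ℝ} {V2 : Matrix (Fin n) (Fin k') ℝ}
    (hSVD : M = U1 * S1 * V1ᵀ + U2 * S2 * V2ᵀ) {H : Matrix (Fin n) (Fin l) ℝ}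
    {G : Matrix (Fin l) (Fin r) ℝ} (hG : V1ᵀ * H * G = 1) :
    M - M * H * pinv (M * H) * M =
      (1 - M * H * pinv (M * H)) * U2 * (S2 * (V2ᵀ - V2ᵀ * H * G * V1ᵀ)) := by
  have hMHG : M * H * (G * V1ᵀ) = U1 * S1 * V1ᵀ + U2 * S2 * (V2ᵀ * H * G * V1ᵀ) := by
    calc M * H * (G * V1ᵀ)
        = U1 * S1 * (V1ᵀ * H * G) * V1ᵀ + U2 * S2 * (V2ᵀ * H * G * V1ᵀ) := by
          rw [hSVD]
          simp only [Matrix.add_mul, Matrix.mul_assoc]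
      _ = _ := by rw [hG, Matrix.mul_one]
  have hres : M - M * H * (G * V1ᵀ) = U2 * S2 * (V2ᵀ - V2ᵀ * H * G * V1ᵀ) := by
    rw [hMHG, hSVD, Matrix.mul_sub]
    abel
  rw [sub_mul_pinv_mul_eq M (M * H) (G * V1ᵀ), hres, Matrix.mul_assoc U2, Matrix.mul_assoc _ U2]

lemma norm_transpose_sub_mul_mul_transpose_le {V1 : Matrix (Fin n) (Fin r) ℝ}
    {V2 : Matrix (Fin n) (Fin k) ℝ} (hV1 : V1ᵀ * V1 = 1) (hV2 : V2ᵀ * V2 = 1)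
    (hV12 : V1ᵀ * V2 = 0) {C : Matrix (Fin k) (Fin l) ℝ} (hC : ‖C‖ ≤ 1)
    (G : Matrix (Fin l) (Fin r) ℝ) : ‖V2ᵀ - C * G * V1ᵀ‖ ≤ √(1 + ‖G‖ ^ 2) := by
  have hV21 : V2ᵀ * V1 = 0 := by
    rw [← transpose_transpose (V2ᵀ * V1), transpose_mul, transpose_transpose, hV12,
      transpose_zero]
  have hgram : (V2ᵀ - C * G * V1ᵀ) * (V2ᵀ - C * G * V1ᵀ)ᵀ = 1 + C * G * (C * G)ᵀ := by
    simp only [transpose_sub, transpose_mul, transpose_transpose, Matrix.sub_mul,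
      Matrix.mul_sub, Matrix.mul_assoc]
    rw [hV2, ← Matrix.mul_assoc V2ᵀ, hV21, ← Matrix.mul_assoc V1ᵀ, hV1, hV12]
    simp
  have hCG : ‖C * G‖ ≤ ‖G‖ :=
    (Matrix.l2_opNorm_mul C G).trans (mul_le_of_le_one_left (norm_nonneg G) hC)
  exact (norm_le_sqrt_one_add_sq_of_mul_transpose_self hgram).trans (by gcongr)

end SVD

theorem rangeFinder_relative_error_bound_general {m n l r : ℕ}
    (M : Matrix (Fin m) (Fin n) ℝ)
    (U1 : Matrix (Fin m) (Fin r) ℝ) (U2 : Matrix (Fin m) (Fin (m - r)) ℝ)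
    (V1 : Matrix (Fin n) (Fin r) ℝ) (V2 : Matrix (Fin n) (Fin (n - r)) ℝ)
    (hU2 : U2ᵀ * U2 = 1)
    (hV1 : V1ᵀ * V1 = 1) (hV2 : V2ᵀ * V2 = 1) (hV12 : V1ᵀ * V2 = 0)
    (S1 : Matrix (Fin r) (Fin r) ℝ) (S2 : Matrix (Fin (m - r)) (Fin (n - r)) ℝ)
    (hS2 : S2 = Matrix.of fun (i : Fin (m - r)) (j : Fin (n - r)) =>
      if (i : ℕ) = (j : ℕ) then sval M (r + (j : ℕ) + 1) else 0)
    (hSVD : M = U1 * S1 * V1ᵀ + U2 * S2 * V2ᵀ)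
    (H : Matrix (Fin n) (Fin l) ℝ) (hH : specNorm H ≤ 1)
    (C1 : Matrix (Fin r) (Fin l) ℝ) (C2 : Matrix (Fin (n - r)) (Fin l) ℝ)
    (hC1 : C1 = V1ᵀ * H) (hC2 : C2 = V2ᵀ * H) (hC1rank : C1.rank = r) :
    specNorm (M - M * H * pinv (M * H) * M) / sval M (r + 1) ≤
        Real.sqrt (1 + specNorm (pinv C1) ^ 2) ∧
    frobNorm (M - M * H * pinv (M * H) * M) / frobTail M r ≤
        Real.sqrt (1 + frobNorm (pinv C1) ^ 2) := by
  set G := pinv C1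
  set W := V2ᵀ - C2 * G * V1ᵀ
  have hres : M - M * H * pinv (M * H) * M = (1 - M * H * pinv (M * H)) * U2 * (S2 * W) := by
    have hG : V1ᵀ * H * G = 1 := by rw [← hC1]; exact mul_pinv_eq_one_of_rank_eq hC1rank
    rw [sub_mul_pinv_mul_eq_of_svd hSVD hG, ← hC2]
  have hQ : ‖(1 - M * H * pinv (M * H)) * U2‖ ≤ 1 :=
    norm_mul_le_one (norm_one_sub_mul_pinv_le_one _) (norm_le_one_of_transpose_mul_self_eq_one hU2)
  have hC2_le : ‖C2‖ ≤ 1 := hC2 ▸ norm_mul_le_one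
    (norm_transpose V2 ▸ norm_le_one_of_transpose_mul_self_eq_one hV2) (specNorm_eq_norm H ▸ hH)
  have hW : ‖W‖ ≤ √(1 + ‖G‖ ^ 2) := norm_transpose_sub_mul_mul_transpose_le hV1 hV2 hV12 hC2_le G
  replace hS2 : S2 = rectDiagonal fun k => sval M (r + k + 1) := hS2
  rw [specNorm_eq_norm, specNorm_eq_norm, hres]
  constructor
  · refine div_le_of_le_mul₀ (sval_nonneg M _) (Real.sqrt_nonneg _) ?_
    calc _ ≤ 1 * (‖S2‖ * ‖W‖) := (Matrix.l2_opNorm_mul _ _).trans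
          (mul_le_mul hQ (Matrix.l2_opNorm_mul _ _) (norm_nonneg _) zero_le_one)
      _ ≤ 1 * (sval M (r + 1) * √(1 + ‖G‖ ^ 2)) := by
          gcongr
          exacts [sval_nonneg M _, hS2 ▸ norm_rectDiagonal_sval_le M r]
      _ = √(1 + ‖G‖ ^ 2) * sval M (r + 1) := by ring
  · refine div_le_of_le_mul₀ (Real.sqrt_nonneg _) (Real.sqrt_nonneg _) ?_
    calc _ ≤ 1 * (frobNorm S2 * ‖W‖) := (frobNorm_mul_le_norm_mul_frobNorm _ _).trans
          (mul_le_mul hQ (frobNorm_mul_le_frobNorm_mul_norm _ _) (frobNorm_nonneg _) zero_le_one)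
      _ ≤ 1 * (frobTail M r * √(1 + frobNorm G ^ 2)) := by
          gcongr
          exacts [Real.sqrt_nonneg _, hS2 ▸ frobNorm_rectDiagonal_sval_le M r,
            hW.trans (by gcongr; exact norm_le_frobNorm G)]
      _ = √(1 + frobNorm G ^ 2) * frobTail M r := by ring

theorem rangeFinder_relative_error_bound {m n l r : ℕ} (hrm : r ≤ m) (hrn : r ≤ n)
    (M : Matrix (Fin m) (Fin n) ℝ)
    (U1 : Matrix (Fin m) (Fin r) ℝ) (U2 : Matrix (Fin m) (Fin (m - r)) ℝ)
    (V1 : Matrix (Fin n) (Fin r) ℝ) (V2 : Matrix (Fin n) (Fin (n - r)) ℝ)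
    (hU1 : U1ᵀ * U1 = 1) (hU2 : U2ᵀ * U2 = 1) (hU12 : U1ᵀ * U2 = 0)
    (hV1 : V1ᵀ * V1 = 1) (hV2 : V2ᵀ * V2 = 1) (hV12 : V1ᵀ * V2 = 0)
    (S1 : Matrix (Fin r) (Fin r) ℝ) (S2 : Matrix (Fin (m - r)) (Fin (n - r)) ℝ)
    (hS1 : S1 = Matrix.diagonal fun i : Fin r => sval M ((i : ℕ) + 1))
    (hS2 : S2 = Matrix.of fun (i : Fin (m - r)) (j : Fin (n - r)) =>
      if (i : ℕ) = (j : ℕ) then sval M (r + (j : ℕ) + 1) else 0)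
    (hSVD : M = U1 * S1 * V1ᵀ + U2 * S2 * V2ᵀ)
    (H : Matrix (Fin n) (Fin l) ℝ) (hH : specNorm H ≤ 1)
    (C1 : Matrix (Fin r) (Fin l) ℝ) (C2 : Matrix (Fin (n - r)) (Fin l) ℝ)
    (hC1 : C1 = V1ᵀ * H) (hC2 : C2 = V2ᵀ * H) (hC1rank : C1.rank = r) :
    specNorm (M - M * H * pinv (M * H) * M) / sval M (r + 1) ≤
        Real.sqrt (1 + specNorm (pinv C1) ^ 2) ∧
    frobNorm (M - M * H * pinv (M * H) * M) / frobTail M r ≤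
        Real.sqrt (1 + frobNorm (pinv C1) ^ 2) :=
  rangeFinder_relative_error_bound_general M U1 U2 V1 V2 hU2 hV1 hV2 hV12 S1 S2 hS2 hSVD H hH C1 C2
    hC1 hC2 hC1rank

end LRA
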